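/- arXiv:1805.09271 — 5 statements merged into one kernel-verified Lean document; each statement's English description precedes it below -/
import Mathlib

section
/- Let m_1, …, m_r be a check set on n qubits with syndrome map σ, and let H : F2^r → F2^l be a metacheck matrix for it. Let e ∈ F2^n × F2^n and u ∈ F2^r, and set s := σ(e) + u. Assume that every y ∈ F2^r with H y = 0 and |y| ≤ 2|u| lies in the image of σ. Let s_rec ∈ F2^r have minimum Hamming weight among all v ∈ F2^r with H(s + v) = 0. Then |s_rec| ≤ |u| and s + s_rec lies in the image of σ, i.e. there exists e_rec with σ(e_rec) = s + s_rec (minimum-weight syndrome repair never causes a metacheck failure). -/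
open Finset

abbrev F2 := ZMod 2

abbrev Pauli (n : ℕ) := (Fin n → F2) × (Fin n → F2)

/-- Hamming weight of a vector over `F2`. -/
def vwt {ι : Type*} [Fintype ι] (v : ι → F2) : ℕ :=
  (Finset.univ.filter fun i => v i ≠ 0).card

/-- Weight of a Pauli operator: number of qubits on which it acts nontrivially. -/
def pwt {n : ℕ} (e : Pauli n) : ℕ :=
  (Finset.univ.filter fun i => e.1 i ≠ 0 ∨ e.2 i ≠ 0).card

/-- Symplectic product of two Pauli operators. -/
def symp {n : ℕ} (e e' : Pauli n) : F2 :=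
  (∑ i, e.1 i * e'.2 i) + (∑ i, e.2 i * e'.1 i)

/-- Syndrome map of a check set. -/
def synd {n r : ℕ} (m : Fin r → Pauli n) (e : Pauli n) : Fin r → F2 :=
  fun i => symp (m i) e

/-- Stabilizer span of a check set. -/
def stab {n r : ℕ} (m : Fin r → Pauli n) : Submodule F2 (Pauli n) :=
  Submodule.span F2 (Set.range m)

/-- Minimum weight of a Pauli modulo the stabilizer span. -/
noncomputable def wtmin {n r : ℕ} (m : Fin r → Pauli n) (e : Pauli n) : ℕ :=
  sInf {w | ∃ s ∈ stab m, w = pwt (e + s)}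

/-- `(t, f)`-soundness of a check set. -/
def IsSound {n r : ℕ} (m : Fin r → Pauli n) (t : ℕ) (f : ℕ → ℝ) : Prop :=
  ∀ e : Pauli n, vwt (synd m e) < t →
    ∃ e' : Pauli n, synd m e' = synd m e ∧ (pwt e' : ℝ) ≤ f (vwt (synd m e))

lemma synd_add {n r : ℕ} (m : Fin r → Pauli n) (e e' : Pauli n) :
    synd m (e + e') = synd m e + synd m e' := by
  funext i
  simp only [synd, symp, Pi.add_apply, Prod.fst_add, Prod.snd_add, mul_add,
    Finset.sum_add_distrib]
  ring

lemma vwt_add_le {ι : Type*} [Fintype ι] (v w : ι → F2) :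
    vwt (v + w) ≤ vwt v + vwt w := by
  classical
  unfold vwt
  refine le_trans (Finset.card_le_card
    (t := (Finset.univ.filter fun i => v i ≠ 0) ∪ (Finset.univ.filter fun i => w i ≠ 0)) ?_)
    (Finset.card_union_le _ _)
  intro i hi
  simp only [Finset.mem_filter, Finset.mem_union, Finset.mem_univ, true_and,
    Pi.add_apply] at *
  by_contra h
  push_neg at h
  simp [h.1, h.2] at hi

/-- Meta-check success: minimum-weight syndrome repair never causes a
metacheck failure, provided all small metacheck-passing syndromes are images of errors. -/
theorem metacheck_success
    (n r l : ℕ) (m : Fin r → Pauli n)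
    (hcomm : ∀ i j, symp (m i) (m j) = 0)
    (H : Matrix (Fin l) (Fin r) F2)
    (hmeta : ∀ e : Pauli n, H.mulVec (synd m e) = 0)
    (e : Pauli n) (u : Fin r → F2)
    (s : Fin r → F2) (hs : s = synd m e + u)
    (hss : ∀ y : Fin r → F2, H.mulVec y = 0 → vwt y ≤ 2 * vwt u →
      ∃ e' : Pauli n, synd m e' = y)
    (srec : Fin r → F2)
    (hsrec : H.mulVec (s + srec) = 0)
    (hsrecmin : ∀ v : Fin r → F2, H.mulVec (s + v) = 0 → vwt srec ≤ vwt v) :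
    vwt srec ≤ vwt u ∧ ∃ erec : Pauli n, synd m erec = s + srec := by
  have hsu : s + u = synd m e := by
    funext i
    simp only [hs, Pi.add_apply]
    rw [add_assoc, CharTwo.add_self_eq_zero, add_zero]
  have h1 : vwt srec ≤ vwt u := hsrecmin u (by rw [hsu]; exact hmeta e)
  refine ⟨h1, ?_⟩
  have hsplit : s + srec = synd m e + (u + srec) := by
    rw [hs]; abel
  have hy : H.mulVec (u + srec) = 0 := by
    have := hsrec
    rw [hsplit, Matrix.mulVec_add, hmeta e, zero_add] at this
    exact this
  have hwy : vwt (u + srec) ≤ 2 * vwt u := by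
    calc vwt (u + srec) ≤ vwt u + vwt srec := vwt_add_le u srec
    _ ≤ vwt u + vwt u := by omega
    _ = 2 * vwt u := by ring
  obtain ⟨e', he'⟩ := hss (u + srec) hy hwy
  exact ⟨e + e', by rw [synd_add, he', hsplit]⟩
end

section
/- For every stabilizer code there is a choice of checks generating its stabilizer, without any redundancy, that is (∞, f(x) = x)-sound. Precisely: let S be an F2-linear subspace of F2^n × F2^n of dimension n − k on which the symplectic product vanishes identically. Then there exists a basis m_1, …, m_{n−k} of S such that, writing σ : F2^n × F2^n → F2^{n−k} for the linear map σ(e)_i = ⟨m_i, e⟩, for every syndrome s ∈ F2^{n−k} there exists e ∈ F2^n × F2^n with σ(e) = s and wt(e) ≤ |s|. -/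
/-!
Take any basis `m₀` of `S`. The symplectic form is nondegenerate and the `m₀ i` are independent,
so the syndrome map of `m₀` is onto `F2^(n-k)`; since single-qubit Paulis span all Paulis, their
syndromes span `F2^(n-k)`, and we pick single-qubit errors `f j` whose syndromes form a basis.
Changing the checks by the inverse of this basis gives a basis `m` of `S` with
`synd m (f j) = e_j`, so a syndrome `s` is produced by `∑ j, s j • f j`, of weight at most
`|s|`.
-/

open Finset

section Pairing

variable {K V W ι : Type*} [AddCommGroup V] [AddCommGroup W] [DecidableEq ι]

theorem surjective_pi_of_linearIndependent [Field K] [Module K V] [Module K W] [Fintype ι]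
    (B : V →ₗ[K] W →ₗ[K] K) (hB : Function.Injective B) {m : ι → V}
    (hm : LinearIndependent K m) :
    Function.Surjective (LinearMap.pi fun i => B (m i)) := by
  rw [← LinearMap.dualMap_injective_iff, injective_iff_map_eq_zero]
  intro φ hφ
  have hcomb : B (∑ i, φ (Pi.single i 1) • m i) = 0 := by
    ext e
    have := LinearMap.congr_fun hφ e
    rw [LinearMap.dualMap_apply, pi_eq_sum_univ' ((LinearMap.pi fun i => B (m i)) e)] at this
    simpa [mul_comm] using this
  have hc := Fintype.linearIndependent_iff.1 hm _ (hB (hcomb.trans (map_zero B).symm))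
  exact LinearMap.pi_ext' fun i => LinearMap.ext_ring (by simpa using hc i)

theorem linearIndependent_of_pairing_eq_single [CommRing K] [Module K V] [Module K W]
    (B : V →ₗ[K] W →ₗ[K] K) {m : ι → V} {f : ι → W}
    (h : ∀ i j, B (m i) (f j) = (Pi.single j 1 : ι → K) i) : LinearIndependent K m := by
  have hdual : (LinearMap.pi fun j => B.flip (f j)) ∘ m = fun i => Pi.single i 1 := by
    ext i j
    simp [h, Pi.single_apply, eq_comm]
  exact .of_comp _ (hdual ▸ Pi.linearIndependent_single_one ι K)

end Pairing

theorem exists_basis_mem_of_span_eq_top {K W : Type*} [DivisionRing K] [AddCommGroup W]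
    [Module K W] [FiniteDimensional K W] {r : ℕ} (hr : Module.finrank K W = r) {T : Set W}
    (hT : Submodule.span K T = ⊤) : ∃ c : Module.Basis (Fin r) K W, ∀ j, c j ∈ T := by
  let c₀ := Module.Basis.ofSpan hT.ge
  exact ⟨c₀.reindex (c₀.indexEquiv (Module.finBasisOfFinrankEq K W hr)),
    fun j => Module.Basis.ofSpan_subset hT.ge (by simp [c₀])⟩

section

variable {n r : ℕ}

def sympForm (n : ℕ) : Pauli n →ₗ[F2] Pauli n →ₗ[F2] F2 :=
  LinearMap.mk₂ F2 symp
    (fun a b c => by simp only [symp, Prod.fst_add, Prod.snd_add, Pi.add_apply, add_mul,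
      sum_add_distrib]; ring)
    (fun t a b => by simp only [symp, Prod.smul_fst, Prod.smul_snd, Pi.smul_apply, smul_eq_mul,
      mul_sum, mul_add, mul_assoc])
    (fun a b c => by simp only [symp, Prod.fst_add, Prod.snd_add, Pi.add_apply, mul_add,
      sum_add_distrib]; ring)
    (fun t a b => by simp only [symp, Prod.smul_fst, Prod.smul_snd, Pi.smul_apply, smul_eq_mul,
      mul_sum, mul_add, mul_left_comm])

@[simp] theorem sympForm_apply (a b : Pauli n) : sympForm n a b = symp a b := rfl

theorem sympForm_injective : Function.Injective (sympForm n) := by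
  refine (injective_iff_map_eq_zero _).2 fun a ha => ?_
  ext j
  · simpa [symp, Pi.single_apply] using LinearMap.congr_fun ha (0, Pi.single j 1)
  · simpa [symp, Pi.single_apply] using LinearMap.congr_fun ha (Pi.single j 1, 0)

def syndL (m : Fin r → Pauli n) : Pauli n →ₗ[F2] Fin r → F2 :=
  LinearMap.pi fun i => sympForm n (m i)

@[simp] theorem syndL_apply (m : Fin r → Pauli n) (e : Pauli n) : syndL m e = synd m e := rfl

theorem pwt_zero : pwt (0 : Pauli n) = 0 := by simp [pwt]

theorem pwt_add_le (a b : Pauli n) : pwt (a + b) ≤ pwt a + pwt b := by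
  refine (card_le_card fun i => ?_).trans (card_union_le _ _)
  simp only [mem_filter, mem_univ, true_and, mem_union, Prod.fst_add, Prod.snd_add, Pi.add_apply]
  contrapose!
  simp +contextual

theorem pwt_smul_le (c : F2) (a : Pauli n) : pwt (c • a) ≤ pwt a :=
  card_le_card <| monotone_filter_right _ fun i => by simp +contextual [or_imp]

theorem pwt_single_le_one (j : Fin n) (x z : F2) :
    pwt ((Pi.single j x, Pi.single j z) : Pauli n) ≤ 1 :=
  (card_le_card (t := {j}) fun i => by by_cases i = j <;> simp_all).trans (card_singleton j).le

theorem span_pwt_le_one : Submodule.span F2 {e : Pauli n | pwt e ≤ 1} = ⊤ := by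
  refine eq_top_iff.2 fun e _ => ?_
  have he : e = ∑ j, ((Pi.single j (e.1 j), Pi.single j (e.2 j)) : Pauli n) := by
    ext i <;> simp [Prod.fst_sum, Prod.snd_sum]
  rw [he]
  exact Submodule.sum_mem _ fun j _ => Submodule.subset_span (pwt_single_le_one j _ _)

theorem synd_sum_smul {r' : ℕ} (A : Matrix (Fin r) (Fin r') F2) (m : Fin r' → Pauli n)
    (e : Pauli n) : synd (fun i => ∑ l, A i l • m l) e = A.mulVec (synd m e) := by
  ext i
  simp [synd, ← sympForm_apply, Matrix.mulVec, dotProduct]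

theorem exists_synd_eq_pwt_le_vwt {m f : Fin r → Pauli n}
    (hf : ∀ j, synd m (f j) = Pi.single j 1) (hwt : ∀ j, pwt (f j) ≤ 1) (s : Fin r → F2) :
    ∃ e, synd m e = s ∧ pwt e ≤ vwt s := by
  refine ⟨∑ j, s j • f j, ?_, ?_⟩
  · simp only [← syndL_apply, map_sum, map_smul] at hf ⊢
    simp only [hf]
    exact (pi_eq_sum_univ' s).symm
  · calc pwt (∑ j, s j • f j) ≤ ∑ j, pwt (s j • f j) :=
          le_sum_of_subadditive pwt pwt_zero.le pwt_add_le _ _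
      _ ≤ ∑ j, if s j ≠ 0 then 1 else 0 := sum_le_sum fun j _ => by
          split_ifs with hs
          · exact (pwt_smul_le _ _).trans (hwt j)
          · simp [not_not.1 hs, pwt_zero]
      _ = vwt s := (card_filter _ _).symm

theorem exists_checks_dual_to_weight_le_one {m₀ : Fin r → Pauli n}
    (hm₀ : LinearIndependent F2 m₀) :
    ∃ m f : Fin r → Pauli n, (∀ i, m i ∈ Submodule.span F2 (Set.range m₀)) ∧
      (∀ j, pwt (f j) ≤ 1) ∧ ∀ j, synd m (f j) = Pi.single j 1 := by
  have hspan : Submodule.span F2 (syndL m₀ '' {e | pwt e ≤ 1}) = ⊤ := by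
    rw [Submodule.span_image, span_pwt_le_one, Submodule.map_top, LinearMap.range_eq_top]
    exact surjective_pi_of_linearIndependent _ sympForm_injective hm₀
  obtain ⟨c, hc⟩ := exists_basis_mem_of_span_eq_top (Module.finrank_fin_fun F2) hspan
  choose f hf_wt hf using hc
  let A := LinearMap.toMatrix' c.equivFun.toLinearMap
  refine ⟨fun i => ∑ l, A i l • m₀ l, f, fun i => Submodule.sum_mem _ fun l _ =>
    Submodule.smul_mem _ _ (Submodule.subset_span ⟨l, rfl⟩), hf_wt, fun j => ?_⟩
  rw [synd_sum_smul, LinearMap.toMatrix'_mulVec, ← syndL_apply, hf]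
  ext i
  simp [c.equivFun_self, Pi.single_apply, eq_comm]

end

theorem good_soundness_for_all_codes_general
    (n k : ℕ)
    (S : Submodule F2 (Pauli n))
    (hdim : Module.finrank F2 S = n - k) :
    ∃ m : Fin (n - k) → Pauli n,
      LinearIndependent F2 m ∧
      Submodule.span F2 (Set.range m) = S ∧
      ∀ s : Fin (n - k) → F2, ∃ e : Pauli n, synd m e = s ∧ pwt e ≤ vwt s := by
  let b := Module.finBasisOfFinrankEq F2 S hdim
  obtain ⟨m, f, hmS, hf_wt, hf⟩ :=
    exists_checks_dual_to_weight_le_one (b.linearIndependent.map' S.subtype S.ker_subtype)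
  have hm : LinearIndependent F2 m :=
    linearIndependent_of_pairing_eq_single (sympForm n) fun i j => congr_fun (hf j) i
  refine ⟨m, hm, Submodule.eq_of_le_of_finrank_eq ?_ ?_, exists_synd_eq_pwt_le_vwt hf hf_wt⟩
  · refine Submodule.span_le.2 (Set.range_subset_iff.2 fun i => ?_)
    exact Submodule.span_le.2 (Set.range_subset_iff.2 fun l => (b l).2) (hmS i)
  · rw [finrank_span_eq_card hm, hdim, Fintype.card_fin]

/-- Theorem 3: every stabilizer code has a redundancy-free choice of checks
that is `(∞, f(x) = x)`-sound. -/
theorem good_soundness_for_all_codes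
    (n k : ℕ) (hk : k ≤ n)
    (S : Submodule F2 (Pauli n))
    (hdim : Module.finrank F2 S = n - k)
    (hiso : ∀ a ∈ S, ∀ b ∈ S, symp a b = 0) :
    ∃ m : Fin (n - k) → Pauli n,
      LinearIndependent F2 m ∧
      Submodule.span F2 (Set.range m) = S ∧
      ∀ s : Fin (n - k) → F2, ∃ e : Pauli n, synd m e = s ∧ pwt e ≤ vwt s :=
  good_soundness_for_all_codes_general n k S hdim
end

section
/- (Partial soundness for the double homological product.) Let δ_{−1} ∈ M_{n0 × n_{−1}}(F2) and δ_0 ∈ M_{n1 × n0}(F2) satisfy δ_0·δ_{−1} = 0. Let R_a ∈ M_{n_{−1} × n_{−1}}(F2), R_b ∈ M_{n0 × n0}(F2), R_c ∈ M_{n1 × n1}(F2), and set S_L := δ_{−1}·R_a + R_b·δ_{−1} ∈ M_{n0 × n_{−1}}(F2) and S_R := δ_0·R_b + R_c·δ_0 ∈ M_{n1 × n0}(F2). Then there exists R_b' ∈ M_{n0 × n0}(F2) such that: (1) δ_0·R_b'·δ_{−1} = δ_0·R_b·δ_{−1} (which equals δ_0·S_L and S_R·δ_{−1}); (2) |R_b'|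 ≤ |S_L|·|S_R|; (3) the remainder S_L − R_b'·δ_{−1} has every column in ker(δ_0), at most |S_L| nonzero columns, and every column of Hamming weight at most |S_L|; (4) the remainder S_R − δ_0·R_b' has every row r (as a column vector) satisfying δ_{−1}ᵀ·r = 0, at most |S_R| nonzero rows, and every row of Hamming weight at most |S_R|. -/
open Matrix
open scoped Kronecker

/-- Hamming weight of a matrix over `F2` (number of nonzero entries). -/
def mwt {ι κ : Type*} [Fintype ι] [Fintype κ] (M : Matrix ι κ F2) : ℕ :=
  (Finset.univ.filter fun p : ι × κ => M p.1 p.2 ≠ 0).card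

/-- Nullity of a matrix over `F2`: dimension of the kernel of the induced linear map. -/
noncomputable def nullity {ι κ : Type*} [Fintype ι] [Fintype κ] (M : Matrix ι κ F2) : ℕ :=
  Module.finrank F2 (LinearMap.ker M.mulVecLin)

/-!
Since `δ₀ δ₋₁ = 0`, both `δ₀ S_L` and `S_R δ₋₁` equal `T := δ₀ R_b δ₋₁`. Over a field `T` has a
generalized inverse `C` (`T C T = T`), and `R_b' := S_L C S_R` works: `δ₀ R_b' δ₋₁ = T C T = T`,
and `R_b'` is supported on the nonzero rows of `S_L` times the nonzero columns of `S_R`. The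
remainder `S_L - R_b' δ₋₁ = S_L - S_L C δ₀ S_L` is both a left and a right multiple of `S_L`, so it
inherits the zero rows and zero columns of `S_L`, and `δ₀` kills it because `T C T = T`. The
`S_R` remainder is the same statement transposed.
-/

theorem LinearMap.exists_comp_comp_eq_self {K V W : Type*} [DivisionRing K] [AddCommGroup V]
    [Module K V] [AddCommGroup W] [Module K W] (f : V →ₗ[K] W) :
    ∃ g : W →ₗ[K] V, f ∘ₗ g ∘ₗ f = f := by
  obtain ⟨s, hs⟩ := f.rangeRestrict.exists_rightInverse_of_surjective f.range_rangeRestrict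
  obtain ⟨g, hg⟩ := LinearMap.exists_extend s
  refine ⟨g, LinearMap.ext fun x => ?_⟩
  have hgf : g (f x) = s ⟨f x, LinearMap.mem_range_self f x⟩ :=
    LinearMap.congr_fun hg ⟨f x, _⟩
  have hfs := congrArg Subtype.val (LinearMap.congr_fun hs ⟨f x, LinearMap.mem_range_self f x⟩)
  simpa [hgf] using hfs

theorem Matrix.exists_mul_mul_eq_self {K m n : Type*} [Field K] [Fintype m] [Fintype n]
    (A : Matrix m n K) : ∃ C : Matrix n m K, A * C * A = A := by
  classical
  obtain ⟨g, hg⟩ := (Matrix.toLin' A).exists_comp_comp_eq_self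
  refine ⟨LinearMap.toMatrix' g, Matrix.toLin'.injective ?_⟩
  rw [Matrix.toLin'_mul, Matrix.toLin'_mul, Matrix.toLin'_toMatrix', LinearMap.comp_assoc, hg]

namespace Matrix

variable {l m n R : Type*} [Fintype l] [Fintype m] [Fintype n] [DecidableEq R]

def rowSupport [Zero R] (A : Matrix m n R) : Finset m :=
  Finset.univ.filter fun i => (fun j => A i j) ≠ 0

def colSupport [Zero R] (A : Matrix m n R) : Finset n :=
  rowSupport Aᵀ

theorem mem_rowSupport [Zero R] {A : Matrix m n R} {i : m} :
    i ∈ rowSupport A ↔ ∃ j, A i j ≠ 0 := by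
  simp [rowSupport, Function.ne_iff]

theorem mem_colSupport [Zero R] {A : Matrix m n R} {j : n} :
    j ∈ colSupport A ↔ ∃ i, A i j ≠ 0 :=
  mem_rowSupport

section Semiring

variable [NonUnitalNonAssocSemiring R]

theorem rowSupport_mul_subset (A : Matrix l m R) (B : Matrix m n R) :
    rowSupport (A * B) ⊆ rowSupport A := by
  intro i
  simp only [mem_rowSupport]
  contrapose!
  intro h j
  simp [mul_apply, h]

theorem colSupport_mul_subset (A : Matrix l m R) (B : Matrix m n R) :
    colSupport (A * B) ⊆ colSupport B := by
  intro j
  simp only [mem_colSupport]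
  contrapose!
  intro h i
  simp [mul_apply, h]

end Semiring

section Ring

variable [NonUnitalNonAssocRing R]

theorem rowSupport_self_sub_self_mul_subset (A : Matrix m n R) (X : Matrix n n R) :
    rowSupport (A - A * X) ⊆ rowSupport A := by
  intro i
  simp only [mem_rowSupport]
  contrapose!
  intro h j
  simp [mul_apply, h]

theorem colSupport_self_sub_mul_self_subset (A : Matrix m n R) (Y : Matrix m m R) :
    colSupport (A - Y * A) ⊆ colSupport A := by
  intro j
  simp only [mem_colSupport]
  contrapose!
  intro h i
  simp [mul_apply, h]

end Ring

end Matrix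

section HammingWeight

variable {k l m n : Type*} [Fintype k] [Fintype l] [Fintype m] [Fintype n]

theorem mwt_transpose (A : Matrix m n F2) : mwt Aᵀ = mwt A :=
  Finset.card_equiv (Equiv.prodComm n m) fun _ => by
    simp only [Finset.mem_filter, Finset.mem_univ, true_and]; rfl

theorem card_rowSupport_le_mwt (A : Matrix m n F2) : (rowSupport A).card ≤ mwt A := by
  refine Finset.card_le_card_of_surjOn Prod.fst fun i hi => ?_
  obtain ⟨j, hj⟩ := mem_rowSupport.mp hi
  exact ⟨(i, j), by simpa [mwt] using hj, rfl⟩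

theorem card_colSupport_le_mwt (A : Matrix m n F2) : (colSupport A).card ≤ mwt A :=
  mwt_transpose A ▸ card_rowSupport_le_mwt Aᵀ

theorem mwt_le_card_rowSupport_mul_card_colSupport (A : Matrix m n F2) :
    mwt A ≤ (rowSupport A).card * (colSupport A).card := by
  rw [← Finset.card_product]
  refine Finset.card_le_card fun p hp => ?_
  have hp : A p.1 p.2 ≠ 0 := (Finset.mem_filter.mp hp).2
  exact Finset.mem_product.mpr ⟨mem_rowSupport.mpr ⟨_, hp⟩, mem_colSupport.mpr ⟨_, hp⟩⟩

theorem vwt_col_le_card_rowSupport (A : Matrix m n F2) (j : n) :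
    vwt (fun i => A i j) ≤ (rowSupport A).card :=
  Finset.card_le_card fun _ hi => mem_rowSupport.mpr ⟨j, (Finset.mem_filter.mp hi).2⟩

theorem mwt_mul_mul_le (A : Matrix m k F2) (C : Matrix k l F2) (B : Matrix l n F2) :
    mwt (A * C * B) ≤ mwt A * mwt B :=
  calc mwt (A * C * B) ≤ (rowSupport (A * C * B)).card * (colSupport (A * C * B)).card :=
        mwt_le_card_rowSupport_mul_card_colSupport _
    _ ≤ (rowSupport A).card * (colSupport B).card := by
        gcongr
        · exact Matrix.mul_assoc A C B ▸ rowSupport_mul_subset A (C * B)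
        · exact colSupport_mul_subset _ _
    _ ≤ mwt A * mwt B := Nat.mul_le_mul (card_rowSupport_le_mwt A) (card_colSupport_le_mwt B)

theorem remainder_kernel_and_support_bounds (A : Matrix m n F2) (B : Matrix k m F2)
    (C : Matrix n k F2) (hC : B * A * C * (B * A) = B * A) :
    (∀ j, B *ᵥ (fun i => (A - A * C * (B * A)) i j) = 0) ∧
      (colSupport (A - A * C * (B * A))).card ≤ mwt A ∧
      ∀ j, vwt (fun i => (A - A * C * (B * A)) i j) ≤ mwt A := by
  have hker : B * (A - A * C * (B * A)) = 0 := by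
    rw [Matrix.mul_sub, ← Matrix.mul_assoc B, ← Matrix.mul_assoc B, hC, sub_self]
  have hcols : colSupport (A - A * C * (B * A)) ⊆ colSupport A := by
    simpa only [Matrix.mul_assoc] using colSupport_self_sub_mul_self_subset A (A * C * B)
  have hrows : rowSupport (A - A * C * (B * A)) ⊆ rowSupport A := by
    simpa only [Matrix.mul_assoc] using rowSupport_self_sub_self_mul_subset A (C * (B * A))
  refine ⟨fun j => funext fun i => congrFun (congrFun hker i) j,
    (Finset.card_le_card hcols).trans (card_colSupport_le_mwt A), fun j => ?_⟩
  calc vwt (fun i => (A - A * C * (B * A)) i j)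
      ≤ (rowSupport (A - A * C * (B * A))).card := vwt_col_le_card_rowSupport _ j
    _ ≤ (rowSupport A).card := Finset.card_le_card hrows
    _ ≤ mwt A := card_rowSupport_le_mwt A

end HammingWeight

/-- Lemma 7: partial soundness for the double homological product. -/
theorem partial_soundness
    (nm1 n0 n1 : ℕ)
    (dm1 : Matrix (Fin n0) (Fin nm1) F2) (d0 : Matrix (Fin n1) (Fin n0) F2)
    (hchain : d0 * dm1 = 0)
    (Ra : Matrix (Fin nm1) (Fin nm1) F2) (Rb : Matrix (Fin n0) (Fin n0) F2)
    (Rc : Matrix (Fin n1) (Fin n1) F2)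
    (SL : Matrix (Fin n0) (Fin nm1) F2) (hSL : SL = dm1 * Ra + Rb * dm1)
    (SR : Matrix (Fin n1) (Fin n0) F2) (hSR : SR = d0 * Rb + Rc * d0) :
    ∃ Rb' : Matrix (Fin n0) (Fin n0) F2,
      -- (1) correctness
      d0 * Rb' * dm1 = d0 * Rb * dm1 ∧
      -- (2) low weight
      mwt Rb' ≤ mwt SL * mwt SR ∧
      -- (3) small S_L remainder
      (∀ j : Fin nm1, d0.mulVec (fun i => (SL - Rb' * dm1) i j) = 0) ∧
      ((Finset.univ.filter fun j : Fin nm1 =>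
          (fun i => (SL - Rb' * dm1) i j) ≠ 0).card ≤ mwt SL) ∧
      (∀ j : Fin nm1, vwt (fun i => (SL - Rb' * dm1) i j) ≤ mwt SL) ∧
      -- (4) small S_R remainder
      (∀ i : Fin n1, dm1ᵀ.mulVec ((SR - d0 * Rb') i) = 0) ∧
      ((@Finset.filter (Fin n1) (fun i : Fin n1 => (SR - d0 * Rb') i ≠ 0) (fun _ => inferInstance)
          Finset.univ).card ≤ mwt SR) ∧
      (∀ i : Fin n1, vwt ((SR - d0 * Rb') i) ≤ mwt SR) := by
  have hL : d0 * SL = d0 * Rb * dm1 := by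
    rw [hSL, Matrix.mul_add, ← Matrix.mul_assoc, hchain, Matrix.zero_mul, zero_add,
      Matrix.mul_assoc]
  have hR : SR * dm1 = d0 * Rb * dm1 := by
    rw [hSR, Matrix.add_mul, Matrix.mul_assoc Rc, hchain, Matrix.mul_zero, add_zero]
  obtain ⟨C, hC⟩ := exists_mul_mul_eq_self (d0 * Rb * dm1)
  have hcorrect : d0 * (SL * C * SR) * dm1 = d0 * Rb * dm1 :=
    calc d0 * (SL * C * SR) * dm1 = d0 * SL * C * (SR * dm1) := by simp only [Matrix.mul_assoc]
      _ = d0 * Rb * dm1 := by rw [hL, hR, hC]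
  have hSLrem : SL - SL * C * SR * dm1 = SL - SL * C * (d0 * SL) := by
    rw [Matrix.mul_assoc _ SR, hR, hL]
  have hSRrem : (SR - d0 * (SL * C * SR))ᵀ = SRᵀ - SRᵀ * Cᵀ * (dm1ᵀ * SRᵀ) := by
    have : d0 * (SL * C * SR) = SR * dm1 * C * SR := by
      rw [hR, ← hL]; simp only [Matrix.mul_assoc]
    rw [transpose_sub, this]
    simp only [transpose_mul, Matrix.mul_assoc]
  have hC_transpose : dm1ᵀ * SRᵀ * Cᵀ * (dm1ᵀ * SRᵀ) = dm1ᵀ * SRᵀ := by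
    rw [← transpose_mul, hR, ← transpose_mul, ← transpose_mul, ← Matrix.mul_assoc, hC]
  obtain ⟨h3a, h3b, h3c⟩ := hSLrem ▸ remainder_kernel_and_support_bounds SL d0 C (by rwa [hL])
  obtain ⟨h4a, h4b, h4c⟩ := hSRrem ▸ remainder_kernel_and_support_bounds SRᵀ dm1ᵀ Cᵀ hC_transpose
  rw [mwt_transpose] at h4b h4c
  exact ⟨SL * C * SR, hcorrect, mwt_mul_mul_le SL C SR, h3a, h3b, h3c, h4a, h4b, h4c⟩
end

section
/- (Distance bound for the level-0 homology of the double product: d̆_0 ≥ min[d̃_{−1}, max(d̃_0, d̃_{−1}ᵀ), d̃_0ᵀ].) Let δ_{−1} ∈ M_{n0 × n_{−1}}(F2) and δ_0 ∈ M_{n1 × n0}(F2) satisfy δ_0·δ_{−1} = 0. Suppose R_a ∈ M_{n_{−1} × n_{−1}}(F2), R_b ∈ M_{n0 × n0}(F2), R_c ∈ M_{n1 × n1}(F2) satisfy R_b·δ_{−1} = δ_{−1}·R_a and δ_0·R_b = R_c·δ_0, and that there are no U ∈ M_{n_{−1} × n0}(F2) and V ∈ M_{n0 × n1}(F2) with R_a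 = U·δ_{−1}, R_b = δ_{−1}·U + V·δ_0 and R_c = δ_0·V (i.e. (R_a, R_b, R_c) is a nontrivial cycle of the double product). Let W := |R_a| + |R_b| + |R_c|. Then at least one of the following holds: (i) there is a nonzero c with δ_{−1}·c = 0 and |c| ≤ W; (ii) there exist both a vector c with δ_0·c = 0, c not in the image of δ_{−1}, |c| ≤ W, and a vector c' with δ_{−1}ᵀ·c' = 0, c' not in the image of δ_0ᵀ, |c'| ≤ W; (iii) there is a nonzero c with δ_0ᵀ·c = 0 and |c| ≤ W. -/
/-! The triple `(Ra, Rb, Rc)` is a chain map from the complex `F2^{n₋₁} → F2^{n₀} → F2^{n₁}` to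
itself, and it is a boundary of the double product exactly when it is null-homotopic, with homotopy
`(U, V)`. Over a field, a chain map of a three-term complex that induces zero on all three homology
groups is null-homotopic. Hence a nontrivial cycle acts nontrivially on the homology at some level,
and applying `Ra`, `Rb`, `Rbᵀ` or `Rcᵀ` to a suitable (co)cycle yields a nontrivial (co)homology
representative. Its weight is at most that of the matrix applied, since `M *ᵥ x` is supported on the
nonzero rows of `M`. -/

open Matrix
open scoped Kronecker

namespace LinearMap

variable {K V W X : Type*} [DivisionRing K] [AddCommGroup V] [AddCommGroup W] [AddCommGroup X]
  [Module K V] [Module K W] [Module K X]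

theorem exists_comp_eq_of_ker_le (g : V →ₗ[K] W) (f : V →ₗ[K] X) (h : ker g ≤ ker f) :
    ∃ u : W →ₗ[K] X, u ∘ₗ g = f := by
  obtain ⟨u, hu⟩ := exists_extend ((ker g).liftQ f h ∘ₗ g.quotKerEquivRange.symm.toLinearMap)
  refine ⟨u, LinearMap.ext fun x => ?_⟩
  have := congr($hu ⟨g x, mem_range_self g x⟩)
  simpa [quotKerEquivRange_symm_apply_image] using this

theorem exists_comp_eq_of_range_le (g : W →ₗ[K] X) (f : V →ₗ[K] X) (h : range f ≤ range g) :
    ∃ v : V →ₗ[K] W, g ∘ₗ v = f := by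
  obtain ⟨v, hv⟩ := Module.projective_lifting_property g.rangeRestrict
    (f.codRestrict _ fun x => h (mem_range_self f x)) g.surjective_rangeRestrict
  exact ⟨v, LinearMap.ext fun x => congr(Subtype.val ($hv x))⟩

theorem exists_comp_eq_of_ker_le_of_range_le (g : V →ₗ[K] W) (f : V →ₗ[K] X) (h : ker g ≤ ker f)
    {S : Submodule K X} (hS : range f ≤ S) :
    ∃ u : W →ₗ[K] X, u ∘ₗ g = f ∧ range u ≤ S := by
  obtain ⟨u, hu⟩ := exists_comp_eq_of_ker_le g (f.codRestrict S fun x => hS (mem_range_self f x))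
    (by simpa [ker_codRestrict] using h)
  refine ⟨S.subtype ∘ₗ u, ?_, ?_⟩
  · rw [comp_assoc, hu, subtype_comp_codRestrict]
  · simpa [range_comp] using Submodule.map_subtype_le S (range u)

theorem exists_comp_eq_of_range_le_of_le_ker (g : W →ₗ[K] X) (f : V →ₗ[K] X)
    (h : range f ≤ range g) {T : Submodule K V} (hT : T ≤ ker f) :
    ∃ v : V →ₗ[K] W, g ∘ₗ v = f ∧ T ≤ ker v := by
  obtain ⟨v, hv⟩ := exists_comp_eq_of_range_le g (T.liftQ f hT) (by rwa [Submodule.range_liftQ])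
  refine ⟨v ∘ₗ T.mkQ, ?_, ?_⟩
  · rw [← comp_assoc, hv, Submodule.liftQ_mkQ]
  · exact (Submodule.ker_mkQ T).symm.le.trans (ker_le_ker_comp _ _)

variable {U : Type*} [AddCommGroup U] [Module K U]

theorem exists_eq_comp_add_comp_of_map_ker_le_range (d₁ : U →ₗ[K] V) (d₂ : V →ₗ[K] W)
    (hd : d₂ ∘ₗ d₁ = 0) (f : V →ₗ[K] V) (hf₁ : f ∘ₗ d₁ = 0) (hf₂ : d₂ ∘ₗ f = 0)
    (hf : (ker d₂).map f ≤ range d₁) :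
    ∃ (a : V →ₗ[K] U) (b : W →ₗ[K] V), f = d₁ ∘ₗ a + b ∘ₗ d₂ ∧ a ∘ₗ d₁ = 0 ∧ d₂ ∘ₗ b = 0 := by
  -- Split `f` along a complement `q` of `ker d₂`: on `q` it factors through `d₂` with values in
  -- `ker d₂`; on `ker d₂` it factors through `d₁` and vanishes on `range d₁`.
  obtain ⟨q, hq⟩ := (ker d₂).exists_isCompl
  set π := (ker d₂).projection q hq
  set ρ := q.projection (ker d₂) hq.symm
  have hπ : ∀ x ∈ ker d₂, π x = x := fun x hx => Submodule.projection_apply_of_mem_left hq hx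
  obtain ⟨a, ha, ha₁⟩ := exists_comp_eq_of_range_le_of_le_ker d₁ (f ∘ₗ π) (T := range d₁)
    (by
      rw [range_comp]
      exact (Submodule.map_mono (Submodule.range_projection hq).le).trans hf)
    (by
      rintro _ ⟨x, rfl⟩
      have hx : d₁ x ∈ ker d₂ := by simp [← comp_apply, hd]
      simp [hπ _ hx, ← comp_apply (f := f), hf₁])
  obtain ⟨b, hb, hb₂⟩ := exists_comp_eq_of_ker_le_of_range_le d₂ (f ∘ₗ ρ) (S := ker d₂)
    (by
      intro x hx
      have : ρ x = 0 := by rwa [← mem_ker, Submodule.ker_projection]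
      simp [this])
    (by
      rintro _ ⟨x, rfl⟩
      simp [← comp_apply (f := d₂), hf₂])
  refine ⟨a, b, ?_, range_le_ker_iff.mp ha₁, range_le_ker_iff.mp hb₂⟩
  rw [ha, hb, ← comp_add, Submodule.projection_add_projection_eq_id, comp_id]

theorem exists_nullHomotopy_of_homology_map_eq_zero (d₁ : U →ₗ[K] V) (d₂ : V →ₗ[K] W)
    (hd : d₂ ∘ₗ d₁ = 0) (Ra : U →ₗ[K] U) (Rb : V →ₗ[K] V) (Rc : W →ₗ[K] W)
    (h₁ : Rb ∘ₗ d₁ = d₁ ∘ₗ Ra) (h₂ : d₂ ∘ₗ Rb = Rc ∘ₗ d₂) (hRa : ker d₁ ≤ ker Ra)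
    (hRb : (ker d₂).map Rb ≤ range d₁) (hRc : range Rc ≤ range d₂) :
    ∃ (s : V →ₗ[K] U) (t : W →ₗ[K] V), Ra = s ∘ₗ d₁ ∧ Rb = d₁ ∘ₗ s + t ∘ₗ d₂ ∧ Rc = d₂ ∘ₗ t := by
  obtain ⟨s₀, hs₀⟩ := exists_comp_eq_of_ker_le d₁ Ra hRa
  obtain ⟨t₀, ht₀⟩ := exists_comp_eq_of_range_le d₂ Rc hRc
  obtain ⟨a, b, hf, ha, hb⟩ := exists_eq_comp_add_comp_of_map_ker_le_range d₁ d₂ hd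
    (Rb - d₁ ∘ₗ s₀ - t₀ ∘ₗ d₂)
    (by rw [sub_comp, sub_comp, h₁, comp_assoc, hs₀, comp_assoc, hd, comp_zero, sub_self,
      sub_zero])
    (by rw [comp_sub, comp_sub, h₂, ← comp_assoc, hd, zero_comp, ← comp_assoc, ht₀, sub_zero,
      sub_self])
    (by
      rintro _ ⟨x, hx, rfl⟩
      have hx : d₂ x = 0 := hx
      obtain ⟨y, hy⟩ := hRb ⟨x, hx, rfl⟩
      exact ⟨y - s₀ x, by simp [hy, hx]⟩)
  refine ⟨s₀ + a, t₀ + b, ?_, ?_, ?_⟩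
  · rw [add_comp, hs₀, ha, add_zero]
  · rw [sub_sub, sub_eq_iff_eq_add] at hf
    rw [hf, comp_add, add_comp]
    abel
  · rw [comp_add, ht₀, hb, add_zero]

end LinearMap

open LinearMap (ker range)

namespace Matrix

variable {K : Type*} [Field K] {l m n : Type*} [Fintype l] [Fintype m] [Fintype n]

theorem exists_transpose_mulVec_eq_zero_of_notMem_range (M : Matrix m n K) {v : m → K}
    (hv : v ∉ range M.mulVecLin) : ∃ z, Mᵀ *ᵥ z = 0 ∧ z ⬝ᵥ v ≠ 0 := by
  classical
  obtain ⟨φ, hφv, hφ⟩ := Submodule.exists_le_ker_of_notMem hv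
  set z := (dotProductEquiv K m).symm φ
  have hz : ∀ w, z ⬝ᵥ w = φ w := fun w => congr($((dotProductEquiv K m).apply_symm_apply φ) w)
  refine ⟨z, dotProduct_eq_zero _ fun w => ?_, by rwa [hz]⟩
  rw [dotProduct_comm, dotProduct_transpose_mulVec, hz]
  exact hφ (LinearMap.mem_range_self _ w)

theorem exists_nullHomotopy_of_homology_map_eq_zero [DecidableEq l] [DecidableEq m]
    [DecidableEq n] (d₁ : Matrix m l K) (d₂ : Matrix n m K) (hd : d₂ * d₁ = 0)
    (Ra : Matrix l l K) (Rb : Matrix m m K) (Rc : Matrix n n K)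
    (h₁ : Rb * d₁ = d₁ * Ra) (h₂ : d₂ * Rb = Rc * d₂)
    (hRa : ker d₁.mulVecLin ≤ ker Ra.mulVecLin)
    (hRb : (ker d₂.mulVecLin).map Rb.mulVecLin ≤ range d₁.mulVecLin)
    (hRc : range Rc.mulVecLin ≤ range d₂.mulVecLin) :
    ∃ (U : Matrix l m K) (V : Matrix m n K), Ra = U * d₁ ∧ Rb = d₁ * U + V * d₂ ∧ Rc = d₂ * V := by
  obtain ⟨s, t, hs, ht, hst⟩ := LinearMap.exists_nullHomotopy_of_homology_map_eq_zero
    (toLin' d₁) (toLin' d₂) (by rw [← toLin'_mul, hd, map_zero]) (toLin' Ra) (toLin' Rb)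
    (toLin' Rc) (by simp only [← toLin'_mul, h₁]) (by simp only [← toLin'_mul, h₂]) hRa hRb hRc
  refine ⟨LinearMap.toMatrix' s, LinearMap.toMatrix' t, ?_, ?_, ?_⟩ <;>
    apply toLin'.injective <;> simpa [toLin'_mul]

end Matrix

section Weight

variable {ι κ : Type*} [Fintype ι] [Fintype κ]

theorem vwt_mulVec_le (M : Matrix ι κ F2) (x : κ → F2) : vwt (M *ᵥ x) ≤ mwt M := by
  classical
  calc vwt (M *ᵥ x)
      ≤ ((Finset.univ.filter fun p : ι × κ => M p.1 p.2 ≠ 0).image Prod.fst).card := by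
        refine Finset.card_le_card fun i hi => ?_
        have hi : (M *ᵥ x) i ≠ 0 := (Finset.mem_filter.1 hi).2
        obtain ⟨j, hj⟩ : ∃ j, M i j ≠ 0 := by
          by_contra! h
          simp [mulVec, dotProduct, h] at hi
        exact Finset.mem_image.2 ⟨(i, j), by simpa using hj, rfl⟩
    _ ≤ mwt M := Finset.card_image_le

theorem mwt_transpose_s15 (M : Matrix ι κ F2) : mwt Mᵀ = mwt M :=
  Finset.card_equiv (Equiv.prodComm κ ι) fun p => by
    simp only [Finset.mem_filter, Finset.mem_univ, true_and]
    rfl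

end Weight

section Alternatives

variable {l m n : Type*} [Fintype l] [Fintype m] [Fintype n]

theorem ker_le_ker_or_exists_nonzero_cycle (d₁ : Matrix m l F2) (Ra : Matrix l l F2)
    (Rb : Matrix m m F2) (h₁ : Rb * d₁ = d₁ * Ra) :
    ker d₁.mulVecLin ≤ ker Ra.mulVecLin ∨ ∃ c, c ≠ 0 ∧ d₁ *ᵥ c = 0 ∧ vwt c ≤ mwt Ra := by
  refine or_iff_not_imp_left.2 fun h => ?_
  obtain ⟨x, hx, hRx⟩ := SetLike.not_le_iff_exists.1 h
  refine ⟨Ra *ᵥ x, hRx, ?_, vwt_mulVec_le Ra x⟩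
  rw [mulVec_mulVec, ← h₁, ← mulVec_mulVec, show d₁ *ᵥ x = 0 from hx, mulVec_zero]

theorem range_le_range_or_exists_nonzero_cocycle (d₂ : Matrix n m F2) (Rb : Matrix m m F2)
    (Rc : Matrix n n F2) (h₂ : d₂ * Rb = Rc * d₂) :
    range Rc.mulVecLin ≤ range d₂.mulVecLin ∨ ∃ c, c ≠ 0 ∧ d₂ᵀ *ᵥ c = 0 ∧ vwt c ≤ mwt Rc := by
  refine or_iff_not_imp_left.2 fun h => ?_
  obtain ⟨_, ⟨w, rfl⟩, hw⟩ := SetLike.not_le_iff_exists.1 h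
  obtain ⟨z, hz, hzw⟩ := exists_transpose_mulVec_eq_zero_of_notMem_range d₂ hw
  refine ⟨Rcᵀ *ᵥ z, fun h0 => hzw ?_, ?_, mwt_transpose_s15 Rc ▸ vwt_mulVec_le Rcᵀ z⟩
  · rw [mulVecLin_apply, ← dotProduct_transpose_mulVec, h0, dotProduct_zero]
  · rw [mulVec_mulVec, ← transpose_mul, ← h₂, transpose_mul, ← mulVec_mulVec, hz, mulVec_zero]

theorem map_ker_le_range_or_exists_homology_pair (d₁ : Matrix m l F2) (d₂ : Matrix n m F2)
    (Ra : Matrix l l F2) (Rb : Matrix m m F2) (Rc : Matrix n n F2) (h₁ : Rb * d₁ = d₁ * Ra)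
    (h₂ : d₂ * Rb = Rc * d₂) :
    (ker d₂.mulVecLin).map Rb.mulVecLin ≤ range d₁.mulVecLin ∨
      ((∃ c, d₂ *ᵥ c = 0 ∧ (¬∃ y, d₁ *ᵥ y = c) ∧ vwt c ≤ mwt Rb) ∧
        ∃ c', d₁ᵀ *ᵥ c' = 0 ∧ (¬∃ y, d₂ᵀ *ᵥ y = c') ∧ vwt c' ≤ mwt Rb) := by
  refine or_iff_not_imp_left.2 fun h => ?_
  obtain ⟨_, ⟨x, hx, rfl⟩, hRx⟩ := SetLike.not_le_iff_exists.1 h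
  have hx : d₂ *ᵥ x = 0 := hx
  obtain ⟨z, hz, hzx⟩ := exists_transpose_mulVec_eq_zero_of_notMem_range d₁ hRx
  refine ⟨⟨Rb *ᵥ x, ?_, hRx, vwt_mulVec_le Rb x⟩, Rbᵀ *ᵥ z, ?_, ?_,
    mwt_transpose_s15 Rb ▸ vwt_mulVec_le Rbᵀ z⟩
  · rw [mulVec_mulVec, h₂, ← mulVec_mulVec, hx, mulVec_zero]
  · rw [mulVec_mulVec, ← transpose_mul, h₁, transpose_mul, ← mulVec_mulVec, hz, mulVec_zero]
  · rintro ⟨y, hy⟩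
    apply hzx
    rw [mulVecLin_apply, ← dotProduct_transpose_mulVec, ← hy, dotProduct_transpose_mulVec, hx,
      dotProduct_zero]

end Alternatives

/-- distance bound for level-0 homology of the double product:
`d̆₀ ≥ min[d̃₋₁, max(d̃₀, d̃₋₁ᵀ), d̃₀ᵀ]`, in reshaped matrix form. -/
theorem double_product_level0_distance
    (nm1 n0 n1 : ℕ)
    (dm1 : Matrix (Fin n0) (Fin nm1) F2) (d0 : Matrix (Fin n1) (Fin n0) F2)
    (hchain : d0 * dm1 = 0)
    (Ra : Matrix (Fin nm1) (Fin nm1) F2) (Rb : Matrix (Fin n0) (Fin n0) F2)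
    (Rc : Matrix (Fin n1) (Fin n1) F2)
    (hcycle1 : Rb * dm1 = dm1 * Ra)
    (hcycle2 : d0 * Rb = Rc * d0)
    (hnontriv : ¬ ∃ (U : Matrix (Fin nm1) (Fin n0) F2) (V : Matrix (Fin n0) (Fin n1) F2),
      Ra = U * dm1 ∧ Rb = dm1 * U + V * d0 ∧ Rc = d0 * V) :
    (∃ c : Fin nm1 → F2, c ≠ 0 ∧ dm1.mulVec c = 0 ∧
      vwt c ≤ mwt Ra + mwt Rb + mwt Rc) ∨
    ((∃ c : Fin n0 → F2, d0.mulVec c = 0 ∧ (¬ ∃ y : Fin nm1 → F2, dm1.mulVec y = c) ∧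
        vwt c ≤ mwt Ra + mwt Rb + mwt Rc) ∧
     (∃ c' : Fin n0 → F2, dm1ᵀ.mulVec c' = 0 ∧ (¬ ∃ y : Fin n1 → F2, d0ᵀ.mulVec y = c') ∧
        vwt c' ≤ mwt Ra + mwt Rb + mwt Rc)) ∨
    (∃ c : Fin n1 → F2, c ≠ 0 ∧ d0ᵀ.mulVec c = 0 ∧
      vwt c ≤ mwt Ra + mwt Rb + mwt Rc) := by
  obtain hRa | ⟨c, hc, hdc, hwc⟩ := ker_le_ker_or_exists_nonzero_cycle dm1 Ra Rb hcycle1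
  · obtain hRc | ⟨c, hc, hdc, hwc⟩ := range_le_range_or_exists_nonzero_cocycle d0 Rb Rc hcycle2
    · obtain hRb | ⟨⟨c, hdc, hc, hwc⟩, c', hdc', hc', hwc'⟩ :=
        map_ker_le_range_or_exists_homology_pair dm1 d0 Ra Rb Rc hcycle1 hcycle2
      · exact absurd (exists_nullHomotopy_of_homology_map_eq_zero dm1 d0 hchain Ra Rb Rc hcycle1
          hcycle2 hRa hRb hRc) hnontriv
      · exact Or.inr (Or.inl ⟨⟨c, hdc, hc, by omega⟩, c', hdc', hc', by omega⟩)
    · exact Or.inr (Or.inr ⟨c, hc, hdc, by omega⟩)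
  · exact Or.inl ⟨c, hc, hdc, by omega⟩
end

section
/- (Hypergraph product quantum code from a classical code: [[2n(n−k)+k², k², d_Q ≥ d]].) Let δ ∈ M_{(n−k) × n}(F2) have full row rank n − k, and suppose every nonzero c ∈ ker(δ) has |c| ≥ d (δ is a parity check matrix of an [n, k, ≥d] classical code with no check redundancy). Define δ̃_{−1} := [1_n ⊗ δᵀ ; δ ⊗ 1_{n−k}] : F2^{n(n−k)} → F2^{n² + (n−k)²} and δ̃_0 := [δ ⊗ 1_n , 1_{n−k} ⊗ δᵀ] : F2^{n² + (n−k)²} → F2^{(n−k)n}. Then: (a) the number of physical qubits is n² + (n−k)² = 2n(n−k) + k²; (b) the number of logical qubits is nullity(δ̃_0) − rank(δ̃_{−1}) = k²; (c) every c with δ̃_0·c = 0 and c not in the image of δ̃_{−1} has |c| ≥ d, and every c with δ̃_{−1}ᵀ·c = 0 and c not in the image of δ̃_0ᵀ has |c| ≥ d (so the quantum code distance d_Q is at least d). -/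
/-!
Since `δ` has full row rank it has a right inverse `B`. Read a vector on `n × n ⊕ m × m`
(`m = n - k`) as a pair of matrices `(X, Y)` via `Matrix.vec`; then `δ̃₋₁` is `Z ↦ (δᵀ Z, Z δᵀ)`
and `δ̃₀` is `(X, Y) ↦ X δᵀ + δᵀ Y`. Using `B`, `δ̃₋₁` is injective and `δ̃₀` surjective, so
rank–nullity gives `n² + m² - 2nm = k²` logical qubits.

For the distance, let `X δᵀ = δᵀ Y` (over `F2`). If some codeword `z ∈ ker δ` has `z X ≠ 0`, then
`δ (z X) = Yᵀ δ z = 0`, so `z X` is a nonzero codeword supported on the nonzero columns of `X` and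
`|c| ≥ |X| ≥ d`. Otherwise `X` kills `ker δ`, hence `X = δᵀ Bᵀ X` and `Y = Bᵀ X δᵀ`, i.e. `c` is
the boundary of `Bᵀ X`. Transposing both blocks reduces the cocycle case to the cycle case.
-/

open Matrix
open scoped Kronecker

namespace Matrix

variable {K : Type*} [Field K] {m n : Type*} [Fintype n]

theorem rank_eq_card_of_mulVec_injective {A : Matrix m n K} (hA : Function.Injective A.mulVec) :
    A.rank = Fintype.card n := by
  rw [rank, LinearMap.finrank_range_of_inj hA, Module.finrank_fintype_fun_eq_card]

theorem rank_eq_card_iff_mulVec_surjective [Fintype m] {A : Matrix m n K} :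
    A.rank = Fintype.card m ↔ Function.Surjective A.mulVec := by
  change _ ↔ Function.Surjective A.mulVecLin
  rw [← LinearMap.range_eq_top, rank, ← Module.finrank_fintype_fun_eq_card K]
  exact ⟨Submodule.eq_top_of_finrank_eq, fun h => by rw [h, finrank_top]⟩

theorem exists_mul_eq_one_of_rank_eq [Fintype m] [DecidableEq m] {A : Matrix m n K}
    (hA : A.rank = Fintype.card m) : ∃ B : Matrix n m K, A * B = 1 :=
  mulVec_surjective_iff_exists_right_inverse.mp (rank_eq_card_iff_mulVec_surjective.mp hA)

end Matrix

theorem rank_add_nullity {ι κ : Type*} [Fintype ι] [Fintype κ] (M : Matrix ι κ F2) :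
    M.rank + nullity M = Fintype.card κ := by
  rw [Matrix.rank, nullity, LinearMap.finrank_range_add_finrank_ker,
    Module.finrank_fintype_fun_eq_card]

theorem vwt_comp_le {ι κ : Type*} [Fintype ι] [Fintype κ] (v : κ → F2) {f : ι → κ}
    (hf : Function.Injective f) : vwt (v ∘ f) ≤ vwt v :=
  Finset.card_le_card_of_injOn f (fun i hi => by simpa using hi) hf.injOn

theorem vwt_vecMul_le {m n : Type*} [Fintype m] [Fintype n] [DecidableEq n]
    (z : m → F2) (X : Matrix m n F2) : vwt (z ᵥ* X) ≤ vwt (vec X) := by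
  calc vwt (z ᵥ* X)
      ≤ ((Finset.univ.filter fun p => vec X p ≠ 0).image Prod.fst).card := by
        refine Finset.card_le_card fun j hj => ?_
        simp only [Finset.mem_filter, Finset.mem_univ, true_and, Finset.mem_image,
          Prod.exists, exists_and_right, exists_eq_right] at hj ⊢
        obtain ⟨i, -, hi⟩ := Finset.exists_ne_zero_of_sum_ne_zero hj
        exact ⟨i, right_ne_zero_of_mul hi⟩
    _ ≤ vwt (vec X) := Finset.card_image_le

namespace HypergraphProduct

variable {R : Type*} {m n : Type*}

theorem exists_eq_sumElim_vec (c : (n × n) ⊕ (m × m) → R) :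
    ∃ (X : Matrix n n R) (Y : Matrix m m R), c = Sum.elim (vec X) (vec Y) := by
  obtain ⟨X, hX⟩ := vec_bijective.surjective (c ∘ Sum.inl)
  obtain ⟨Y, hY⟩ := vec_bijective.surjective (c ∘ Sum.inr)
  exact ⟨X, Y, by rw [hX, hY, Sum.elim_comp_inl_inr]⟩

section

variable [CommRing R] [Fintype m] [Fintype n] (δ : Matrix m n R)

theorem mulVec_vecMul_eq_zero {X : Matrix n n R} {Y : Matrix m m R} (hXY : X * δᵀ = δᵀ * Y)
    {z : n → R} (hz : δ *ᵥ z = 0) : δ *ᵥ (z ᵥ* X) = 0 := by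
  have hXY' : δ * Xᵀ = Yᵀ * δ := by simpa using congrArg transpose hXY
  rw [← mulVec_transpose, mulVec_mulVec, hXY', ← mulVec_mulVec, hz, mulVec_zero]

-- The columns of `1 - B * δ` lie in `ker δ`, so `(1 - B * δ)ᵀ * X = 0`.
theorem transpose_mul_mul_eq_self [DecidableEq m] [DecidableEq n] {p : Type*}
    {B : Matrix n m R} (hB : δ * B = 1) {X : Matrix n p R}
    (hX : ∀ z, δ *ᵥ z = 0 → z ᵥ* X = 0) : δᵀ * (Bᵀ * X) = X := by
  set P := 1 - B * δ
  have hδP : δ * P = 0 := by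
    rw [Matrix.mul_sub, Matrix.mul_one, ← Matrix.mul_assoc, hB, Matrix.one_mul, sub_self]
  have hPX : Pᵀ * X = 0 := by
    ext i j
    rw [mul_apply_eq_vecMul]
    exact congrFun (hX _ (funext fun a => congrFun (congrFun hδP a) i)) j
  calc δᵀ * (Bᵀ * X) = X - Pᵀ * X := by
        simp only [P, transpose_sub, transpose_one, transpose_mul, Matrix.sub_mul,
          Matrix.one_mul, Matrix.mul_assoc, sub_sub_cancel]
    _ = X := by rw [hPX, sub_zero]

end

variable [DecidableEq m] [DecidableEq n]

-- The paper's `δ̃₀` and `δ̃₋₁`, with `m = n - k`.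
def boundary0 [CommRing R] (δ : Matrix m n R) : Matrix (m × n) ((n × n) ⊕ (m × m)) R :=
  fromCols (δ ⊗ₖ 1) (1 ⊗ₖ δᵀ)

def boundaryNeg1 [CommRing R] (δ : Matrix m n R) : Matrix ((n × n) ⊕ (m × m)) (n × m) R :=
  fromRows (1 ⊗ₖ δᵀ) (δ ⊗ₖ 1)

variable [Fintype m] [Fintype n]

section CommRing

variable [CommRing R] (δ : Matrix m n R)

theorem boundary0_mulVec_vec (X : Matrix n n R) (Y : Matrix m m R) :
    boundary0 δ *ᵥ Sum.elim (vec X) (vec Y) = vec (X * δᵀ + δᵀ * Y) := by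
  rw [boundary0, fromCols_mulVec_sumElim, kronecker_mulVec_vec, kronecker_mulVec_vec,
    Matrix.one_mul, transpose_one, Matrix.mul_one, vec_add]

theorem boundaryNeg1_mulVec_vec (Z : Matrix m n R) :
    boundaryNeg1 δ *ᵥ vec Z = Sum.elim (vec (δᵀ * Z)) (vec (Z * δᵀ)) := by
  rw [boundaryNeg1, fromRows_mulVec, kronecker_mulVec_vec, kronecker_mulVec_vec,
    Matrix.one_mul, transpose_one, Matrix.mul_one]

theorem boundaryNeg1_transpose_mulVec_vec (X : Matrix n n R) (Y : Matrix m m R) :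
    (boundaryNeg1 δ)ᵀ *ᵥ Sum.elim (vec X) (vec Y) = vec (δ * X + Y * δ) := by
  rw [boundaryNeg1, transpose_fromRows, ← kroneckerMap_transpose, ← kroneckerMap_transpose,
    fromCols_mulVec_sumElim, kronecker_mulVec_vec, kronecker_mulVec_vec]
  simp only [transpose_transpose, transpose_one, Matrix.one_mul, Matrix.mul_one, vec_add]

theorem boundary0_transpose_mulVec_vec (W : Matrix n m R) :
    (boundary0 δ)ᵀ *ᵥ vec W = Sum.elim (vec (W * δ)) (vec (δ * W)) := by
  rw [boundary0, transpose_fromCols, ← kroneckerMap_transpose, ← kroneckerMap_transpose,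
    fromRows_mulVec, kronecker_mulVec_vec, kronecker_mulVec_vec]
  simp only [transpose_transpose, transpose_one, Matrix.one_mul, Matrix.mul_one]

end CommRing

section Field

variable {K : Type*} [Field K] (δ : Matrix m n K) {B : Matrix n m K}

theorem rank_boundaryNeg1 (hB : δ * B = 1) :
    (boundaryNeg1 δ).rank = Fintype.card n * Fintype.card m := by
  rw [rank_eq_card_of_mulVec_injective, Fintype.card_prod]
  refine (injective_iff_map_eq_zero (boundaryNeg1 δ).mulVecLin).mpr fun v hv => ?_
  obtain ⟨Z, rfl⟩ := vec_bijective.surjective v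
  have hδZ : vec (δᵀ * Z) = 0 := by
    funext p
    exact congrFun ((boundaryNeg1_mulVec_vec δ Z).symm.trans hv) (Sum.inl p)
  rw [vec_eq_zero_iff] at hδZ
  calc vec Z = vec ((δ * B)ᵀ * Z) := by rw [hB, transpose_one, Matrix.one_mul]
    _ = 0 := by rw [transpose_mul, Matrix.mul_assoc, hδZ, Matrix.mul_zero, vec_zero]

theorem rank_boundary0 (hB : δ * B = 1) :
    (boundary0 δ).rank = Fintype.card m * Fintype.card n := by
  rw [← Fintype.card_prod, rank_eq_card_iff_mulVec_surjective]
  intro y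
  obtain ⟨W, rfl⟩ := vec_bijective.surjective y
  refine ⟨Sum.elim (vec (W * Bᵀ)) (vec 0), ?_⟩
  rw [boundary0_mulVec_vec, Matrix.mul_zero, add_zero, Matrix.mul_assoc, ← transpose_mul, hB,
    transpose_one, Matrix.mul_one]

end Field

section F2

variable (δ : Matrix m n F2) {B : Matrix n m F2} {d : ℕ}

theorem exists_lift_or_le_vwt (hB : δ * B = 1)
    (hdist : ∀ c : n → F2, c ≠ 0 → δ *ᵥ c = 0 → d ≤ vwt c)
    {X : Matrix n n F2} {Y : Matrix m m F2} (hXY : X * δᵀ = δᵀ * Y) :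
    (∃ Z : Matrix m n F2, X = δᵀ * Z ∧ Y = Z * δᵀ) ∨ d ≤ vwt (vec X) := by
  by_cases hX : ∀ z, δ *ᵥ z = 0 → z ᵥ* X = 0
  · refine .inl ⟨Bᵀ * X, (transpose_mul_mul_eq_self δ hB hX).symm, ?_⟩
    calc Y = (δ * B)ᵀ * Y := by rw [hB, transpose_one, Matrix.one_mul]
      _ = Bᵀ * X * δᵀ := by rw [transpose_mul, Matrix.mul_assoc, ← hXY, Matrix.mul_assoc]
  · push Not at hX
    obtain ⟨z, hz, hzX⟩ := hX
    exact .inr ((hdist _ hzX (mulVec_vecMul_eq_zero δ hXY hz)).trans (vwt_vecMul_le z X))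

theorem le_vwt_of_boundary0_mulVec_eq_zero (hB : δ * B = 1)
    (hdist : ∀ c : n → F2, c ≠ 0 → δ *ᵥ c = 0 → d ≤ vwt c)
    {c : (n × n) ⊕ (m × m) → F2} (hc : boundary0 δ *ᵥ c = 0)
    (hc' : ¬ ∃ y, boundaryNeg1 δ *ᵥ y = c) : d ≤ vwt c := by
  obtain ⟨X, Y, rfl⟩ := exists_eq_sumElim_vec c
  rw [boundary0_mulVec_vec, vec_eq_zero_iff, ← ZModModule.sub_eq_add, sub_eq_zero] at hc
  rcases exists_lift_or_le_vwt δ hB hdist hc with ⟨Z, rfl, rfl⟩ | hX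
  · exact absurd ⟨vec Z, boundaryNeg1_mulVec_vec δ Z⟩ hc'
  · exact hX.trans (vwt_comp_le (Sum.elim (vec X) (vec Y)) Sum.inl_injective)

theorem le_vwt_of_boundaryNeg1_transpose_mulVec_eq_zero (hB : δ * B = 1)
    (hdist : ∀ c : n → F2, c ≠ 0 → δ *ᵥ c = 0 → d ≤ vwt c)
    {c : (n × n) ⊕ (m × m) → F2} (hc : (boundaryNeg1 δ)ᵀ *ᵥ c = 0)
    (hc' : ¬ ∃ y, (boundary0 δ)ᵀ *ᵥ y = c) : d ≤ vwt c := by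
  obtain ⟨X, Y, rfl⟩ := exists_eq_sumElim_vec c
  rw [boundaryNeg1_transpose_mulVec_vec, vec_eq_zero_iff, ← ZModModule.sub_eq_add,
    sub_eq_zero] at hc
  have hXY : Xᵀ * δᵀ = δᵀ * Yᵀ := by rw [← transpose_mul, hc, transpose_mul]
  rcases exists_lift_or_le_vwt δ hB hdist hXY with ⟨Z, hX, hY⟩ | hX
  · refine absurd ⟨vec Zᵀ, ?_⟩ hc'
    rw [boundary0_transpose_mulVec_vec, ← transpose_transpose X, ← transpose_transpose Y, hX, hY,
      transpose_mul, transpose_mul, transpose_transpose]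
  · calc d ≤ vwt (vec X ∘ Prod.swap) := hX
      _ ≤ vwt (vec X) := vwt_comp_le _ Prod.swap_injective
      _ ≤ vwt (Sum.elim (vec X) (vec Y)) :=
        vwt_comp_le (Sum.elim (vec X) (vec Y)) Sum.inl_injective

end F2

end HypergraphProduct

open HypergraphProduct in
/-- Corollary 2: hypergraph product quantum code from a classical code:
a redundancy-free `[n, k, ≥d]` classical code yields a `[[2n(n−k)+k², k², d_Q ≥ d]]`
quantum code. -/
theorem hypergraph_product_code
    (n k d : ℕ) (hk : k ≤ n)
    (δ : Matrix (Fin (n - k)) (Fin n) F2)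
    (hrank : δ.rank = n - k)
    (hdist : ∀ c : Fin n → F2, c ≠ 0 → δ.mulVec c = 0 → d ≤ vwt c)
    (dm1 : Matrix ((Fin n × Fin n) ⊕ (Fin (n - k) × Fin (n - k))) (Fin n × Fin (n - k)) F2)
    (hdm1 : dm1 = Matrix.fromRows
      ((1 : Matrix (Fin n) (Fin n) F2) ⊗ₖ δᵀ)
      (δ ⊗ₖ (1 : Matrix (Fin (n - k)) (Fin (n - k)) F2)))
    (d0 : Matrix (Fin (n - k) × Fin n) ((Fin n × Fin n) ⊕ (Fin (n - k) × Fin (n - k))) F2)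
    (hd0 : d0 = Matrix.fromCols
      (δ ⊗ₖ (1 : Matrix (Fin n) (Fin n) F2))
      ((1 : Matrix (Fin (n - k)) (Fin (n - k)) F2) ⊗ₖ δᵀ)) :
    -- (a) number of physical qubits
    n^2 + (n - k)^2 = 2 * n * (n - k) + k^2 ∧
    -- (b) number of logical qubits
    (nullity d0 : ℤ) - (dm1.rank : ℤ) = (k : ℤ)^2 ∧
    -- (c) quantum code distance at least d
    (∀ c : ((Fin n × Fin n) ⊕ (Fin (n - k) × Fin (n - k))) → F2,
      d0.mulVec c = 0 → (¬ ∃ y, dm1.mulVec y = c) → d ≤ vwt c) ∧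
    (∀ c : ((Fin n × Fin n) ⊕ (Fin (n - k) × Fin (n - k))) → F2,
      dm1ᵀ.mulVec c = 0 → (¬ ∃ y, d0ᵀ.mulVec y = c) → d ≤ vwt c) := by
  obtain rfl : dm1 = boundaryNeg1 δ := hdm1
  obtain rfl : d0 = boundary0 δ := hd0
  obtain ⟨B, hB⟩ := exists_mul_eq_one_of_rank_eq (hrank.trans (Fintype.card_fin _).symm)
  have hnk : ((n - k : ℕ) : ℤ) = n - k := Nat.cast_sub hk
  refine ⟨by zify [hk]; ring, ?_, fun _ => le_vwt_of_boundary0_mulVec_eq_zero δ hB hdist,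
    fun _ => le_vwt_of_boundaryNeg1_transpose_mulVec_eq_zero δ hB hdist⟩
  have h := rank_add_nullity (boundary0 δ)
  simp only [rank_boundary0 δ hB, Fintype.card_sum, Fintype.card_prod, Fintype.card_fin] at h
  rw [rank_boundaryNeg1 δ hB, Fintype.card_fin, Fintype.card_fin]
  have h' := congrArg (Nat.cast : ℕ → ℤ) h
  push_cast [hnk] at h' ⊢
  linear_combination h'
end
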